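/- For coprime positive integers p, q with q odd, define c(q,p) = (1/p)·Σ_{k odd, 1 ≤ k ≤ 2p-1} cot(πk/(2p))·cot(πqk/(2p)). Then c(q,p) = -4·s(q,p) + 8·s(q,2p). -/

import Mathlib

open Finset Real

open Classical in
/-- The sawtooth function: 0 on integers, fractional part minus 1/2 otherwise. -/
noncomputable def saw (x : ℝ) : ℝ :=
  if ∃ n : ℤ, x = n then 0 else Int.fract x - 1/2

/-- The Dedekind sum s(q,p). -/
noncomputable def dedekindSum (q : ℤ) (p : ℕ) : ℝ :=
  ∑ μ ∈ Finset.range p, saw ((μ : ℝ) / p) * saw ((q : ℝ) * μ / p)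

/-- The Dedekind–Rademacher sum s(q,p;x,y). -/
noncomputable def drSum (q : ℤ) (p : ℕ) (x y : ℝ) : ℝ :=
  ∑ μ ∈ Finset.range p, saw (((μ : ℝ) + y) / p) * saw ((q : ℝ) * ((μ : ℝ) + y) / p + x)

/-!
For a `p`-th root of unity `w = e^{2πim/p}` the finite Fourier transform of the sawtooth is
`∑_{μ<p} ((μ/p)) w^μ = (w + 1) / (2 (w - 1)) = cot(πm/p) / (2i)`; when `p ∣ m` both sides vanish,
`Real.cot` being `0` at its poles. Multiplying two such expansions and using orthogonality of the
characters `k ↦ w^k` gives `∑_{k<p} cot(πk/p) cot(πqk/p) = 4p·s(q,p)`. The theorem is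
the difference of these identities for `2p` and for `p`: the even `k < 2p` reproduce the sum for `p`.
-/

open Classical in
lemma saw_eq_ite_fract (x : ℝ) : saw x = if Int.fract x = 0 then 0 else Int.fract x - 1 / 2 := by
  have h : (∃ n : ℤ, x = n) ↔ Int.fract x = 0 := by
    rw [Int.fract_eq_zero_iff]
    exact exists_congr fun n => eq_comm
  rw [saw]
  exact if_congr h rfl rfl

lemma saw_periodic : Function.Periodic saw 1 := fun x => by
  simp only [saw_eq_ite_fract, Int.fract_add_one]

lemma saw_neg (x : ℝ) : saw (-x) = -saw x := by
  simp only [saw_eq_ite_fract, Int.fract_neg_eq_zero]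
  split_ifs with h
  · simp
  · rw [Int.fract_neg h]; ring

lemma saw_natCast_div {μ p : ℕ} (hμ : μ < p) :
    saw (μ / p) = μ / p - 1 / 2 + if μ = 0 then 1 / 2 else 0 := by
  rcases Nat.eq_zero_or_pos μ with rfl | hμ0
  · simp [saw_eq_ite_fract]
  · have hp : (0 : ℝ) < p := by exact_mod_cast hμ0.trans hμ
    have hfract : Int.fract ((μ : ℝ) / p) = μ / p :=
      Int.fract_eq_self.mpr ⟨by positivity, (div_lt_one hp).mpr (by exact_mod_cast hμ)⟩
    rw [saw_eq_ite_fract, hfract, if_neg (by positivity), if_neg hμ0.ne']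
    ring

lemma sub_one_mul_sum_range_mul_pow {R : Type*} [CommRing R] (z : R) (n : ℕ) :
    (z - 1) * ∑ i ∈ range n, (i : R) * z ^ i = n * z ^ n - z * ∑ i ∈ range n, z ^ i := by
  induction n with
  | zero => simp
  | succ n ih =>
    simp only [sum_range_succ, mul_add, ih]
    push_cast
    ring

lemma sum_saw_mul_pow_of_pow_eq_one {p : ℕ} (hp : 0 < p) {z : ℂ} (hz : z ^ p = 1) :
    ∑ μ ∈ range p, (saw (μ / p) : ℂ) * z ^ μ = (z + 1) / (2 * (z - 1)) := by
  have hp' : (p : ℂ) ≠ 0 := by exact_mod_cast hp.ne'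
  have hexpand : ∑ μ ∈ range p, (saw (μ / p) : ℂ) * z ^ μ
      = (∑ μ ∈ range p, (μ : ℂ) * z ^ μ) / p - (∑ μ ∈ range p, z ^ μ) / 2 + 1 / 2 := by
    have hterm : ∀ μ ∈ range p, (saw (μ / p) : ℂ) * z ^ μ
        = (μ : ℂ) * z ^ μ / p - z ^ μ / 2 + if μ = 0 then 1 / 2 else 0 := by
      intro μ hμ
      rw [saw_natCast_div (mem_range.mp hμ)]
      split_ifs with h
      · subst h; push_cast; ring
      · push_cast; ring
    rw [sum_congr rfl hterm, sum_add_distrib, sum_sub_distrib, sum_div, sum_div, sum_ite_eq',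
      if_pos (mem_range.mpr hp)]
  rcases eq_or_ne z 1 with rfl | hz1
  · have hgauss : ∑ μ ∈ range p, (μ : ℂ) = p * (p - 1) / 2 := by
      have h := congrArg (Nat.cast : ℕ → ℂ) (sum_range_id_mul_two p)
      push_cast [Nat.cast_sub hp] at h
      linear_combination h / 2
    rw [hexpand]
    simp only [one_pow, mul_one, sum_const, card_range, nsmul_eq_mul, hgauss]
    field_simp
    ring
  · have hz1' : z - 1 ≠ 0 := sub_ne_zero.mpr hz1
    have hgeom : ∑ μ ∈ range p, z ^ μ = 0 := by rw [geom_sum_eq hz1, hz, sub_self, zero_div]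
    have hweighted : ∑ μ ∈ range p, (μ : ℂ) * z ^ μ = p / (z - 1) := by
      rw [eq_div_iff hz1', mul_comm, sub_one_mul_sum_range_mul_pow, hz, hgeom]
      ring
    rw [hexpand, hgeom, hweighted]
    field_simp
    ring

lemma Function.Periodic.sum_range_ite_dvd_add {M : Type*} [AddCommMonoid M] {f : ℝ → M}
    (hf : Function.Periodic f 1) {p : ℕ} (hp : 0 < p) (a : ℤ) :
    ∑ μ ∈ range p, (if (p : ℤ) ∣ μ + a then f (μ / p) else 0) = f (-a / p) := by
  have hpz : (0 : ℤ) < p := by exact_mod_cast hp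
  set μ₀ := ((-a) % p).toNat
  have hμ₀ : (μ₀ : ℤ) = (-a) % p := Int.toNat_of_nonneg (Int.emod_nonneg _ hpz.ne')
  have hmem : μ₀ ∈ range p := by
    have := Int.emod_lt_of_pos (-a) hpz
    rw [mem_range]
    omega
  have hdvd : ∀ μ ∈ range p, (p : ℤ) ∣ μ + a ↔ μ = μ₀ := by
    intro μ hμ
    have hμp : (μ : ℤ) % p = μ := Int.emod_eq_of_lt (by positivity) (by simpa using hμ)
    rw [show (μ : ℤ) + a = μ - -a by ring, ← Int.modEq_iff_dvd, Int.ModEq, hμp, ← hμ₀]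
    omega
  rw [sum_eq_single_of_mem μ₀ hmem fun μ hμ hne => if_neg ((hdvd μ hμ).not.mpr hne),
    if_pos ((hdvd μ₀ hmem).mpr rfl)]
  have hμ₀' : (μ₀ : ℝ) / p = -a / p - ((-a / p : ℤ) : ℝ) * 1 := by
    rw [show (μ₀ : ℝ) = ((μ₀ : ℤ) : ℝ) by norm_cast, hμ₀, Int.emod_def]
    push_cast
    field_simp
  rw [hμ₀', hf.sub_int_mul_eq]

lemma sum_range_ite_dvd_add_saw {p : ℕ} (hp : 0 < p) (a : ℤ) :
    ∑ μ ∈ range p, (if (p : ℤ) ∣ μ + a then (saw (μ / p) : ℂ) else 0) = -saw (a / p) := by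
  have h := (saw_periodic.comp (fun x : ℝ => (x : ℂ))).sum_range_ite_dvd_add hp a
  simp only [Function.comp_apply] at h
  rw [h, neg_div, saw_neg, Complex.ofReal_neg]

lemma IsPrimitiveRoot.sum_range_zpow_pow {K : Type*} [Field K] {ζ : K} {p : ℕ}
    (hζ : IsPrimitiveRoot ζ p) (j : ℤ) :
    ∑ k ∈ range p, (ζ ^ j) ^ k = if (p : ℤ) ∣ j then (p : K) else 0 := by
  split_ifs with h
  · simp [(hζ.zpow_eq_one_iff_dvd j).mpr h]
  · have h1 : ζ ^ j ≠ 1 := mt (hζ.zpow_eq_one_iff_dvd j).mp h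
    rw [geom_sum_eq h1, ← zpow_natCast, ← zpow_mul, mul_comm, zpow_mul, zpow_natCast,
      hζ.pow_eq_one, one_zpow, sub_self, zero_div]

lemma ofReal_cot_eq_two_I_mul_sum_saw {p : ℕ} (hp : 0 < p) (m : ℤ) :
    (Real.cot (π * m / p) : ℂ) = 2 * Complex.I *
      ∑ μ ∈ range p, (saw (μ / p) : ℂ) * (Complex.exp (2 * π * Complex.I / p) ^ m) ^ μ := by
  have hζ := Complex.isPrimitiveRoot_exp p hp.ne'
  have hw : Complex.exp (2 * π * Complex.I / p) ^ m =
      Complex.exp (2 * π * Complex.I * (m / p)) := by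
    rw [← Complex.exp_int_mul]
    ring_nf
  have hwp : (Complex.exp (2 * π * Complex.I / p) ^ m) ^ p = 1 := by
    rw [← zpow_natCast, ← zpow_mul, mul_comm m, zpow_mul, zpow_natCast, hζ.pow_eq_one, one_zpow]
  rw [sum_saw_mul_pow_of_pow_eq_one hp hwp, hw, Complex.ofReal_cot]
  push_cast
  rw [show (π : ℂ) * m / p = π * (m / p) by ring, Complex.cot_pi_eq_exp_ratio]
  generalize Complex.exp (2 * π * Complex.I * (m / p)) = e
  rw [div_eq_mul_inv, div_eq_mul_inv, mul_inv, mul_inv, ← neg_sub e 1, inv_neg, Complex.inv_I]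
  ring

lemma ofReal_cot_mul_cot_eq_sum {p : ℕ} (hp : 0 < p) (q : ℤ) (k : ℕ) :
    ((Real.cot (π * k / p) * Real.cot (π * q * k / p) : ℝ) : ℂ) =
      -4 * ∑ μ ∈ range p, ∑ ν ∈ range p, (saw (μ / p) : ℂ) * saw (ν / p) *
        (Complex.exp (2 * π * Complex.I / p) ^ (μ + q * ν : ℤ)) ^ k := by
  have hζ0 : Complex.exp (2 * π * Complex.I / p) ≠ 0 := Complex.exp_ne_zero _
  rw [Complex.ofReal_mul, show π * q * k / p = π * ((q * k : ℤ) : ℝ) / p by push_cast; ring,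
    show π * k / p = π * ((k : ℤ) : ℝ) / p by push_cast; ring, ofReal_cot_eq_two_I_mul_sum_saw hp,
    ofReal_cot_eq_two_I_mul_sum_saw hp, mul_mul_mul_comm, sum_mul_sum,
    show 2 * Complex.I * (2 * Complex.I) = -4 by linear_combination 4 * Complex.I_sq]
  congr 1
  refine sum_congr rfl fun μ _ => sum_congr rfl fun ν _ => ?_
  simp only [← zpow_natCast, ← zpow_mul, mul_mul_mul_comm _ (_ ^ _), ← zpow_add₀ hζ0]
  ring_nf

theorem sum_cot_mul_cot_eq_dedekindSum {p : ℕ} (hp : 0 < p) (q : ℤ) :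
    ∑ k ∈ range p, Real.cot (π * k / p) * Real.cot (π * q * k / p) = 4 * p * dedekindSum q p := by
  set ζ := Complex.exp (2 * π * Complex.I / p) with hζdef
  have hζ : IsPrimitiveRoot ζ p := Complex.isPrimitiveRoot_exp p hp.ne'
  set s : ℕ → ℂ := fun μ => saw (μ / p)
  apply Complex.ofReal_injective
  rw [Complex.ofReal_sum, sum_congr rfl fun k _ => ofReal_cot_mul_cot_eq_sum hp q k, ← hζdef]
  calc ∑ k ∈ range p, -4 * ∑ μ ∈ range p, ∑ ν ∈ range p, s μ * s ν * (ζ ^ (μ + q * ν : ℤ)) ^ k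
      = -4 * ∑ ν ∈ range p, s ν * (p * ∑ μ ∈ range p,
          if (p : ℤ) ∣ μ + q * ν then s μ else 0) := by
        rw [← mul_sum, sum_comm, sum_congr rfl fun μ _ => sum_comm, sum_comm]
        congr 1
        refine sum_congr rfl fun ν _ => ?_
        rw [mul_sum, mul_sum]
        refine sum_congr rfl fun μ _ => ?_
        rw [← mul_sum, hζ.sum_range_zpow_pow]
        split_ifs <;> ring
    _ = -4 * ∑ ν ∈ range p, s ν * (p * -saw (q * ν / p)) := by
        simp only [s, sum_range_ite_dvd_add_saw hp, Int.cast_mul, Int.cast_natCast]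
    _ = ((4 * p * dedekindSum q p : ℝ) : ℂ) := by
        simp only [dedekindSum, mul_sum, s]
        push_cast
        exact sum_congr rfl fun ν _ => by ring

lemma Finset.sum_range_two_mul {M : Type*} [AddCommMonoid M] (f : ℕ → M) (n : ℕ) :
    ∑ i ∈ range (2 * n), f i = ∑ j ∈ range n, f (2 * j) + ∑ j ∈ range n, f (2 * j + 1) := by
  induction n with
  | zero => simp
  | succ n ih =>
    rw [show 2 * (n + 1) = 2 * n + 1 + 1 by ring, sum_range_succ, sum_range_succ, ih,
      sum_range_succ, sum_range_succ, add_add_add_comm, add_assoc]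

theorem cot_sum_eq_dedekind_general (p q : ℕ) (hp : 0 < p) :
    (1 / (p : ℝ)) * ∑ k ∈ Finset.range p,
        Real.cot (Real.pi * (2 * (k : ℝ) + 1) / (2 * p))
          * Real.cot (Real.pi * q * (2 * (k : ℝ) + 1) / (2 * p))
      = -4 * dedekindSum (q : ℤ) p + 8 * dedekindSum (q : ℤ) (2 * p) := by
  have hp' : (p : ℝ) ≠ 0 := by positivity
  have hdouble := sum_cot_mul_cot_eq_dedekindSum (by omega : 0 < 2 * p) q
  have hsingle := sum_cot_mul_cot_eq_dedekindSum hp q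
  rw [sum_range_two_mul] at hdouble
  push_cast at hdouble hsingle ⊢
  have hhalve : ∀ a x : ℝ, a * (2 * x) / (2 * p) = a * x / p := fun a x => by field_simp
  simp only [hhalve, hsingle] at hdouble
  rw [eq_sub_of_add_eq' hdouble]
  field_simp
  ring

theorem cot_sum_eq_dedekind (p q : ℕ) (hp : 0 < p) (hq : 0 < q)
    (hcop : Nat.Coprime p q) (hodd : Odd q) :
    (1 / (p : ℝ)) * ∑ k ∈ Finset.range p,
        Real.cot (Real.pi * (2 * (k : ℝ) + 1) / (2 * p))
          * Real.cot (Real.pi * q * (2 * (k : ℝ) + 1) / (2 * p))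
      = -4 * dedekindSum (q : ℤ) p + 8 * dedekindSum (q : ℤ) (2 * p) :=
  cot_sum_eq_dedekind_general p q hp
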